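/- Let h : Σ₂* → Σ₃* be the morphism defined by h(0) = 0012 and h(1) = 0112, and let w' be an infinite word over Σ₂ = {0,1} that is not periodic. Then h(w') is not periodic. -/

import Mathlib

/-- The periodic infinite word `y^ω = yyy⋯`. -/
def powOmega {α : Type*} (y : List α) (h : y ≠ []) : ℕ → α :=
  fun n => y[n % y.length]'(Nat.mod_lt n (List.length_pos_iff.mpr h))

/-- The morphism `h` with `h(0) = 0012` and `h(1) = 0112`. -/
def h : Fin 2 → List (Fin 3)
  | 0 => [0, 0, 1, 2]
  | 1 => [0, 1, 1, 2]

/-- The image `h(w')` of an infinite word `w'` under the (4-uniform) morphism `h`: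
the `n`-th letter of `h(w'₀)h(w'₁)h(w'₂)⋯`. -/
def hOmega (w' : ℕ → Fin 2) : ℕ → Fin 3 :=
  fun n => (h (w' (n / 4))).getD (n % 4) 0

lemma key2 (a : Fin 2) (r : ℕ) (hr : r < 4) : (h a).getD r 0 = 2 ↔ r = 3 := by
  fin_cases a <;> interval_cases r <;> simp [h]

lemma inj1 (a b : Fin 2) (hab : (h a).getD 1 0 = (h b).getD 1 0) : a = b := by
  fin_cases a <;> fin_cases b <;> simp_all [h]

lemma mod_eq (g : ℕ → Fin 2) (q : ℕ) (hq : 0 < q) (hp : ∀ n, g (n + q) = g n) :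
    ∀ n, g n = g (n % q) := by
  intro n
  induction n using Nat.strong_induction_on with
  | _ n ih =>
    by_cases hn : n < q
    · rw [Nat.mod_eq_of_lt hn]
    · push_neg at hn
      have h1 : n - q + q = n := Nat.sub_add_cancel hn
      rw [← h1, hp, ih (n - q) (by omega), Nat.add_mod_right]

/-- If `w'` is a nonperiodic infinite binary word, then `h(w')` is not periodic. -/
theorem stmt_5 (w' : ℕ → Fin 2)
    (hw' : ¬ ∃ (y : List (Fin 2)) (hy : y ≠ []), w' = powOmega y hy) :
    ¬ ∃ (y : List (Fin 3)) (hy : y ≠ []), hOmega w' = powOmega y hy := by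
  rintro ⟨y, hy, heq⟩
  set p := y.length with hpdef
  have hp : 0 < p := List.length_pos_iff.mpr hy
  have hper : ∀ n, hOmega w' (n + p) = hOmega w' n := by
    intro n
    have h1 := congrFun heq (n + p)
    have h2 := congrFun heq n
    rw [h1, h2]
    simp [powOmega, hpdef]
  -- 2 occurs exactly at positions ≡ 3 mod 4
  have htwo : ∀ n, hOmega w' n = 2 ↔ n % 4 = 3 := by
    intro n
    exact key2 (w' (n / 4)) (n % 4) (Nat.mod_lt n (by norm_num))
  have h3 : hOmega w' 3 = 2 := (htwo 3).mpr rfl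
  have h3p : hOmega w' (3 + p) = 2 := by rw [hper]; exact h3
  have hdvd : p % 4 = 0 := by
    have := (htwo (3 + p)).mp h3p
    omega
  set q := p / 4 with hqdef
  have hq4 : p = 4 * q := by omega
  have hq : 0 < q := by omega
  -- w' has period q
  have hwper : ∀ n, w' (n + q) = w' n := by
    intro n
    have h1 := hper (4 * n + 1)
    have e1 : (4 * n + 1 + p) = 4 * (n + q) + 1 := by omega
    rw [e1] at h1
    have e2 : ∀ m : ℕ, hOmega w' (4 * m + 1) = (h (w' m)).getD 1 0 := by
      intro m
      have : (4 * m + 1) / 4 = m := by omega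
      have h4 : (4 * m + 1) % 4 = 1 := by omega
      simp [hOmega, this, h4]
    rw [e2, e2] at h1
    exact inj1 _ _ h1
  apply hw'
  refine ⟨List.ofFn (fun i : Fin q => w' i), by simp [hq.ne'], ?_⟩
  funext n
  have hlen : (List.ofFn (fun i : Fin q => w' i)).length = q := by simp
  simp only [powOmega, List.getElem_ofFn, hlen]
  exact mod_eq w' q hq hwper n
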